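/- For every Schwartz function f : ℝ → ℂ, the function of (u,l) ∈ ℝ² given by f̂(u)·[(u−l)³·(l²+m²)·(l²+4m²)^{3/2} + l³·((u−l)²+m²)·((u−l)²+4m²)^{3/2}] / [((u−l)²+m²)·(l²+m²)·((u−l)²+4m²)^{5/4}·(l²+4m²)^{5/4}] is Lebesgue integrable on ℝ². -/

import Mathlib

open MeasureTheory

/-- Fourier transform `f̂(k) = (2π)^{−1/2}·∫ e^{−ikx}·f(x) dx` of a Schwartz
function `f : ℝ → ℂ`. -/
noncomputable def fourierHat (f : SchwartzMap ℝ ℂ) (k : ℝ) : ℂ :=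
  ((1 / Real.sqrt (2 * Real.pi) : ℝ) : ℂ) *
    ∫ x : ℝ, Complex.exp (-(Complex.I * (k : ℂ) * (x : ℂ))) * f x


open MeasureTheory Real
open scoped RealInnerProductSpace

set_option maxHeartbeats 1000000

noncomputable section

def tcg (m x : ℝ) : ℝ := x ^ 3 * ((x ^ 2 + m ^ 2)⁻¹ * (x ^ 2 + 4 * m ^ 2) ^ (-(5:ℝ)/4))
def tcg' (m x : ℝ) : ℝ :=
  3 * x ^ 2 * ((x ^ 2 + m ^ 2)⁻¹ * (x ^ 2 + 4 * m ^ 2) ^ (-(5:ℝ)/4))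
  - 2 * x ^ 4 * (((x ^ 2 + m ^ 2) ^ 2)⁻¹ * (x ^ 2 + 4 * m ^ 2) ^ (-(5:ℝ)/4))
  - (5/2) * x ^ 4 * ((x ^ 2 + m ^ 2)⁻¹ * (x ^ 2 + 4 * m ^ 2) ^ (-(9:ℝ)/4))
def tch (m x : ℝ) : ℝ := (x ^ 2 + 4 * m ^ 2) ^ ((1:ℝ)/4)
variable {m : ℝ}
lemma D1_pos (hm : 0 < m) (x : ℝ) : 0 < x ^ 2 + m ^ 2 := by positivity
lemma D2_pos (hm : 0 < m) (x : ℝ) : 0 < x ^ 2 + 4 * m ^ 2 := by positivity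

lemma hasDerivAt_tcg (hm : 0 < m) (x : ℝ) : HasDerivAt (tcg m) (tcg' m x) x := by
  have hD1 : HasDerivAt (fun y : ℝ => y ^ 2 + m ^ 2) (2 * x) x := by
    simpa using (hasDerivAt_pow 2 x).add_const (m ^ 2)
  have hD2 : HasDerivAt (fun y : ℝ => y ^ 2 + 4 * m ^ 2) (2 * x) x := by
    simpa using (hasDerivAt_pow 2 x).add_const (4 * m ^ 2)
  have hinv : HasDerivAt (fun y : ℝ => (y ^ 2 + m ^ 2)⁻¹)
      (-(2 * x) / (x ^ 2 + m ^ 2) ^ 2) x := hD1.inv (D1_pos hm x).ne'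
  have hr : HasDerivAt (fun y : ℝ => (y ^ 2 + 4 * m ^ 2) ^ (-(5:ℝ)/4))
      (2 * x * (-(5:ℝ)/4) * (x ^ 2 + 4 * m ^ 2) ^ (-(5:ℝ)/4 - 1)) x :=
    hD2.rpow_const (Or.inl (D2_pos hm x).ne')
  have hx3 : HasDerivAt (fun y : ℝ => y ^ 3) (3 * x ^ 2) x := by
    simpa using hasDerivAt_pow 3 x
  have := hx3.mul (hinv.mul hr)
  refine this.congr_deriv ?_
  simp only [Pi.mul_apply]
  have he : (-(5:ℝ)/4 - 1) = -(9:ℝ)/4 := by norm_num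
  rw [he]
  unfold tcg'
  set A := (x ^ 2 + 4 * m ^ 2) ^ (-(5:ℝ)/4)
  set B := (x ^ 2 + 4 * m ^ 2) ^ (-(9:ℝ)/4)
  field_simp
  ring

lemma rpow_anti {x y p : ℝ} (hx : 0 < x) (hxy : x ≤ y) (hp : p ≤ 0) : y ^ p ≤ x ^ p := by
  have hy := hx.trans_le hxy
  rw [← neg_neg p, Real.rpow_neg hx.le, Real.rpow_neg hy.le]
  exact inv_anti₀ (Real.rpow_pos_of_pos hx _)
    (Real.rpow_le_rpow hx.le hxy (by linarith))

lemma tcg'_abs_le (hm : 0 < m) (x : ℝ) :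
    |tcg' m x| ≤ (15/2) * (x ^ 2 + 4 * m ^ 2) ^ (-(5:ℝ)/4) := by
  have h1 := D1_pos hm x
  have h2 := D2_pos hm x
  set A := (x ^ 2 + 4 * m ^ 2) ^ (-(5:ℝ)/4) with hA
  set B := (x ^ 2 + 4 * m ^ 2) ^ (-(9:ℝ)/4) with hB
  have hApos : 0 < A := Real.rpow_pos_of_pos h2 _
  have hBpos : 0 < B := Real.rpow_pos_of_pos h2 _
  -- key: (x²+4m²) * B = A
  have hDB : (x ^ 2 + 4 * m ^ 2) * B = A := by
    rw [hA, hB, show (-(5:ℝ)/4) = 1 + (-(9:ℝ)/4) by norm_num, Real.rpow_add h2,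
      Real.rpow_one]
  have e1 : x ^ 2 * (x ^ 2 + m ^ 2)⁻¹ ≤ 1 := by
    rw [← div_eq_mul_inv, div_le_one h1]; nlinarith
  have e2 : x ^ 4 * ((x ^ 2 + m ^ 2) ^ 2)⁻¹ ≤ 1 := by
    rw [← div_eq_mul_inv, div_le_one (by positivity)]; nlinarith
  have e3 : x ^ 4 * (x ^ 2 + m ^ 2)⁻¹ ≤ x ^ 2 + 4 * m ^ 2 := by
    rw [← div_eq_mul_inv, div_le_iff₀ h1]; nlinarith
  have t1 : 3 * x ^ 2 * ((x ^ 2 + m ^ 2)⁻¹ * A) ≤ 3 * A := by nlinarith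
  have t2 : 2 * x ^ 4 * (((x ^ 2 + m ^ 2) ^ 2)⁻¹ * A) ≤ 2 * A := by nlinarith
  have t3 : (5/2) * x ^ 4 * ((x ^ 2 + m ^ 2)⁻¹ * B) ≤ (5/2) * A := by nlinarith
  have n1 : 0 ≤ 3 * x ^ 2 * ((x ^ 2 + m ^ 2)⁻¹ * A) := by positivity
  have n2 : 0 ≤ 2 * x ^ 4 * (((x ^ 2 + m ^ 2) ^ 2)⁻¹ * A) := by positivity
  have n3 : 0 ≤ (5/2) * x ^ 4 * ((x ^ 2 + m ^ 2)⁻¹ * B) := by positivity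
  rw [tcg', abs_le, ← hA, ← hB]
  constructor <;> [linarith; linarith]

lemma abs_le_rpow_half (hm : 0 < m) (x : ℝ) : |x| ≤ (x ^ 2 + 4 * m ^ 2) ^ ((1:ℝ)/2) := by
  rw [← Real.sqrt_eq_rpow, ← Real.sqrt_sq_eq_abs]
  exact Real.sqrt_le_sqrt (by nlinarith)

lemma tcg_abs_le (hm : 0 < m) (x : ℝ) :
    |tcg m x| ≤ (x ^ 2 + 4 * m ^ 2) ^ (-(3:ℝ)/4) := by
  have h1 := D1_pos hm x
  have h2 := D2_pos hm x
  have hApos : (0:ℝ) < (x ^ 2 + 4 * m ^ 2) ^ (-(5:ℝ)/4) := Real.rpow_pos_of_pos h2 _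
  have hx3 : |x| ^ 3 ≤ (x ^ 2 + m ^ 2) * (x ^ 2 + 4 * m ^ 2) ^ ((1:ℝ)/2) := by
    have hx := abs_le_rpow_half hm x
    have hx2 : x ^ 2 ≤ x ^ 2 + m ^ 2 := by nlinarith
    calc |x| ^ 3 = x ^ 2 * |x| := by rw [show (3:ℕ)=2+1 from rfl, pow_add, pow_one, sq_abs]
      _ ≤ (x ^ 2 + m ^ 2) * (x ^ 2 + 4 * m ^ 2) ^ ((1:ℝ)/2) := by
          apply mul_le_mul hx2 hx (abs_nonneg x) h1.le
  have key : (x ^ 2 + 4 * m ^ 2) ^ ((1:ℝ)/2) * (x ^ 2 + 4 * m ^ 2) ^ (-(5:ℝ)/4)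
      = (x ^ 2 + 4 * m ^ 2) ^ (-(3:ℝ)/4) := by
    rw [← Real.rpow_add h2]; norm_num
  have haux : |(x ^ 2 + m ^ 2)⁻¹ * (x ^ 2 + 4 * m ^ 2) ^ (-(5:ℝ)/4)|
      = (x ^ 2 + m ^ 2)⁻¹ * (x ^ 2 + 4 * m ^ 2) ^ (-(5:ℝ)/4) :=
    abs_of_pos (mul_pos (inv_pos.2 h1) hApos)
  calc |tcg m x| = |x| ^ 3 * ((x ^ 2 + m ^ 2)⁻¹ * (x ^ 2 + 4 * m ^ 2) ^ (-(5:ℝ)/4)) := by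
        rw [tcg, abs_mul, abs_pow, haux]
    _ ≤ ((x ^ 2 + m ^ 2) * (x ^ 2 + 4 * m ^ 2) ^ ((1:ℝ)/2)) *
        ((x ^ 2 + m ^ 2)⁻¹ * (x ^ 2 + 4 * m ^ 2) ^ (-(5:ℝ)/4)) := by
        apply mul_le_mul_of_nonneg_right hx3 (by positivity)
    _ = (x ^ 2 + 4 * m ^ 2) ^ ((1:ℝ)/2) * (x ^ 2 + 4 * m ^ 2) ^ (-(5:ℝ)/4) := by
        field_simp
    _ = (x ^ 2 + 4 * m ^ 2) ^ (-(3:ℝ)/4) := key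
end

lemma hasDerivAt_tch (hm : 0 < m) (x : ℝ) :
    HasDerivAt (tch m) (2 * x * ((1:ℝ)/4) * (x ^ 2 + 4 * m ^ 2) ^ ((1:ℝ)/4 - 1)) x := by
  have hD2 : HasDerivAt (fun y : ℝ => y ^ 2 + 4 * m ^ 2) (2 * x) x := by
    simpa using (hasDerivAt_pow 2 x).add_const (4 * m ^ 2)
  exact hD2.rpow_const (Or.inl (D2_pos hm x).ne')

lemma tch'_abs_le (hm : 0 < m) (x : ℝ) :
    |2 * x * ((1:ℝ)/4) * (x ^ 2 + 4 * m ^ 2) ^ ((1:ℝ)/4 - 1)|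
      ≤ (1/2) * (4 * m ^ 2) ^ (-(1:ℝ)/4) := by
  have h2 := D2_pos hm x
  have e : ((1:ℝ)/4 - 1) = -(3:ℝ)/4 := by norm_num
  have hB : |(x ^ 2 + 4 * m ^ 2) ^ (-(3:ℝ)/4)| = (x ^ 2 + 4 * m ^ 2) ^ (-(3:ℝ)/4) :=
    abs_of_pos (Real.rpow_pos_of_pos h2 _)
  rw [e, show 2 * x * ((1:ℝ)/4) = x * (1/2) by ring, abs_mul, abs_mul, hB,
    abs_of_nonneg (by norm_num : (0:ℝ) ≤ 1/2)]
  have h1 : |x| * (x ^ 2 + 4 * m ^ 2) ^ (-(3:ℝ)/4) ≤ (x ^ 2 + 4 * m ^ 2) ^ (-(1:ℝ)/4) := by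
    calc |x| * (x ^ 2 + 4 * m ^ 2) ^ (-(3:ℝ)/4)
        ≤ (x ^ 2 + 4 * m ^ 2) ^ ((1:ℝ)/2) * (x ^ 2 + 4 * m ^ 2) ^ (-(3:ℝ)/4) :=
          mul_le_mul_of_nonneg_right (abs_le_rpow_half hm x)
            (Real.rpow_pos_of_pos h2 _).le
      _ = (x ^ 2 + 4 * m ^ 2) ^ (-(1:ℝ)/4) := by rw [← Real.rpow_add h2]; norm_num
  have h2' : (x ^ 2 + 4 * m ^ 2) ^ (-(1:ℝ)/4) ≤ (4 * m ^ 2) ^ (-(1:ℝ)/4) :=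
    rpow_anti (by positivity) (by nlinarith) (by norm_num)
  have := h1.trans h2'
  linarith

lemma tch_sub_le (hm : 0 < m) (x y : ℝ) :
    |tch m y - tch m x| ≤ ((1/2) * (4 * m ^ 2) ^ (-(1:ℝ)/4)) * |y - x| := by
  have := Convex.norm_image_sub_le_of_norm_hasDerivWithin_le
    (f := tch m) (f' := fun t => 2 * t * ((1:ℝ)/4) * (t ^ 2 + 4 * m ^ 2) ^ ((1:ℝ)/4 - 1))
    (s := Set.uIcc x y) (fun t _ => (hasDerivAt_tch hm t).hasDerivWithinAt)
    (fun t _ => by rw [Real.norm_eq_abs]; exact tch'_abs_le hm t) (convex_uIcc x y)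
    Set.left_mem_uIcc Set.right_mem_uIcc
  simpa only [Real.norm_eq_abs] using this

lemma tcg_sub_le (hm : 0 < m) {C : ℝ} (x y : ℝ)
    (hC : ∀ t ∈ Set.uIcc x y, (15/2) * (t ^ 2 + 4 * m ^ 2) ^ (-(5:ℝ)/4) ≤ C) :
    |tcg m y - tcg m x| ≤ C * |y - x| := by
  have := Convex.norm_image_sub_le_of_norm_hasDerivWithin_le
    (f := tcg m) (f' := tcg' m) (s := Set.uIcc x y)
    (fun t _ => (hasDerivAt_tcg hm t).hasDerivWithinAt)
    (fun t ht => by rw [Real.norm_eq_abs]; exact (tcg'_abs_le hm t).trans (hC t ht))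
    (convex_uIcc x y) Set.left_mem_uIcc Set.right_mem_uIcc
  simpa only [Real.norm_eq_abs] using this

lemma tch_le (hm : 0 < m) (x : ℝ) :
    tch m x ≤ (1 + 2*m) ^ ((1:ℝ)/2) * (1 + |x|) ^ ((1:ℝ)/2) := by
  have hb : x ^ 2 + 4 * m ^ 2 ≤ ((1 + 2*m) * (1 + |x|)) ^ 2 := by
    nlinarith [sq_abs x, abs_nonneg x, hm.le, mul_nonneg hm.le (abs_nonneg x)]
  have h0 : (0:ℝ) ≤ (1 + 2*m) * (1 + |x|) := by positivity
  calc tch m x = (x ^ 2 + 4 * m ^ 2) ^ ((1:ℝ)/4) := rfl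
    _ ≤ (((1 + 2*m) * (1 + |x|)) ^ 2) ^ ((1:ℝ)/4) :=
        Real.rpow_le_rpow (by positivity) hb (by norm_num)
    _ = ((1 + 2*m) * (1 + |x|)) ^ ((1:ℝ)/2) := by
        rw [← Real.rpow_natCast ((1 + 2*m) * (1 + |x|)) 2, ← Real.rpow_mul h0]
        norm_num
    _ = (1 + 2*m) ^ ((1:ℝ)/2) * (1 + |x|) ^ ((1:ℝ)/2) :=
        Real.mul_rpow (by positivity) (by positivity)

lemma tch_pos {m : ℝ} (hm : 0 < m) (x : ℝ) : 0 < tch m x :=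
  Real.rpow_pos_of_pos (D2_pos hm x) _

lemma tcg_neg (m x : ℝ) : tcg m (-x) = - tcg m x := by
  unfold tcg
  rw [show (-x)^3 = -(x^3) by ring, show (-x)^2 = x^2 by ring]
  ring

lemma tch_neg (m x : ℝ) : tch m (-x) = tch m x := by
  unfold tch
  rw [show (-x)^2 = x^2 by ring]

lemma tcg_continuous {m : ℝ} (hm : 0 < m) : Continuous (tcg m) := by
  unfold tcg
  refine (continuous_pow 3).mul (Continuous.mul ?_ ?_)
  · exact ((continuous_pow 2).add continuous_const).inv₀ (fun x => (D1_pos hm x).ne')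
  · exact Continuous.rpow_const ((continuous_pow 2).add continuous_const)
      (fun x => Or.inl (D2_pos hm x).ne')

lemma tch_continuous {m : ℝ} (hm : 0 < m) : Continuous (tch m) := by
  unfold tch
  exact Continuous.rpow_const ((continuous_pow 2).add continuous_const)
    (fun x => Or.inl (D2_pos hm x).ne')

noncomputable def tck (m u l : ℝ) : ℝ := tcg m (u - l) * tch m l + tcg m l * tch m (u - l)

lemma tck_bound (hm : 0 < m) : ∃ C : ℝ, 0 ≤ C ∧ ∀ u l : ℝ,
    |tck m u l| ≤ C * (1 + |u|) ^ 3 * (1 + |l|) ^ (-(3:ℝ)/2) := by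
  set M0 : ℝ := (4*m^2) ^ (-(3:ℝ)/4) with hM0def
  set S : ℝ := (1+2*m) ^ ((1:ℝ)/2) with hSdef
  set H : ℝ := (1/2) * (4*m^2) ^ (-(1:ℝ)/4) with hHdef
  have hM0 : 0 < M0 := Real.rpow_pos_of_pos (by positivity) _
  have hS : 0 < S := Real.rpow_pos_of_pos (by linarith) _
  have hH : 0 < H := by
    rw [hHdef]; positivity
  set C2 : ℝ := ((15/2) * 4 ^ ((5:ℝ)/4) * (S * 2 ^ ((1:ℝ)/2)) + H) * 2 ^ ((3:ℝ)/2) with hC2def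
  have hC2 : 0 < C2 := by
    have : (0:ℝ) < 4 ^ ((5:ℝ)/4) := Real.rpow_pos_of_pos (by norm_num) _
    have : (0:ℝ) < 2 ^ ((1:ℝ)/2) := Real.rpow_pos_of_pos (by norm_num) _
    have : (0:ℝ) < 2 ^ ((3:ℝ)/2) := Real.rpow_pos_of_pos (by norm_num) _
    positivity
  refine ⟨54*(M0*S) + C2, by positivity, fun u l => ?_⟩
  have hu1 : (1:ℝ) ≤ 1 + |u| := by linarith [abs_nonneg u]
  have hWpos : (0:ℝ) < (1 + |l|) ^ (-(3:ℝ)/2) :=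
    Real.rpow_pos_of_pos (by linarith [abs_nonneg l]) _
  have hu3 : (0:ℝ) < (1 + |u|) ^ 3 := by positivity
  rcases le_or_gt (|l|) (2*(1+|u|)) with hcase | hcase
  · -- small |l|
    have hKle : |tck m u l| ≤ 6*(M0*S)*(1+|u|) := by
      have g1 : |tcg m (u-l)| ≤ M0 :=
        (tcg_abs_le hm _).trans (rpow_anti (by positivity) (by nlinarith) (by norm_num))
      have g2 : |tcg m l| ≤ M0 :=
        (tcg_abs_le hm _).trans (rpow_anti (by positivity) (by nlinarith) (by norm_num))
      have hhalf1 : (1+|l|) ^ ((1:ℝ)/2) ≤ 1 + |l| := by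
        nth_rewrite 2 [← Real.rpow_one (1+|l|)]
        exact Real.rpow_le_rpow_of_exponent_le (by linarith [abs_nonneg l]) (by norm_num)
      have hhalf2 : (1+|u-l|) ^ ((1:ℝ)/2) ≤ 1 + |u-l| := by
        nth_rewrite 2 [← Real.rpow_one (1+|u-l|)]
        exact Real.rpow_le_rpow_of_exponent_le (by linarith [abs_nonneg (u-l)]) (by norm_num)
      have t1 : tch m l ≤ S * (3*(1+|u|)) := by
        refine (tch_le hm l).trans ?_
        apply mul_le_mul_of_nonneg_left (hhalf1.trans (by linarith)) hS.le
      have t2 : tch m (u-l) ≤ S * (3*(1+|u|)) := by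
        refine (tch_le hm (u-l)).trans ?_
        have : |u - l| ≤ |u| + |l| := abs_sub u l
        apply mul_le_mul_of_nonneg_left (hhalf2.trans (by linarith)) hS.le
      calc |tck m u l| ≤ |tcg m (u-l) * tch m l| + |tcg m l * tch m (u-l)| := abs_add_le _ _
        _ = |tcg m (u-l)| * tch m l + |tcg m l| * tch m (u-l) := by
            rw [abs_mul, abs_mul, abs_of_pos (tch_pos hm l), abs_of_pos (tch_pos hm (u-l))]
        _ ≤ M0 * (S * (3*(1+|u|))) + M0 * (S * (3*(1+|u|))) :=
            add_le_add (mul_le_mul g1 t1 (tch_pos hm l).le hM0.le)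
              (mul_le_mul g2 t2 (tch_pos hm (u-l)).le hM0.le)
        _ = 6*(M0*S)*(1+|u|) := by ring
    have hone : (1+|l|) ^ ((3:ℝ)/2) * (1+|l|) ^ (-(3:ℝ)/2) = 1 := by
      rw [← Real.rpow_add (by linarith [abs_nonneg l])]; norm_num
    have h32 : (1+|l|) ^ ((3:ℝ)/2) ≤ 9*(1+|u|)^2 := by
      have e1 : (1+|l|) ^ ((3:ℝ)/2) ≤ (1+|l|) ^ (2:ℝ) :=
        Real.rpow_le_rpow_of_exponent_le (by linarith [abs_nonneg l]) (by norm_num)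
      have e2 : (1+|l|) ^ (2:ℝ) = (1+|l|) ^ (2:ℕ) := Real.rpow_natCast _ 2
      have e3 : (1+|l|) ^ (2:ℕ) ≤ (3*(1+|u|)) ^ (2:ℕ) := by
        apply pow_le_pow_left₀ (by linarith [abs_nonneg l]) (by linarith)
      calc (1+|l|) ^ ((3:ℝ)/2) ≤ (1+|l|) ^ (2:ℕ) := e2 ▸ e1
        _ ≤ (3*(1+|u|)) ^ (2:ℕ) := e3
        _ = 9*(1+|u|)^2 := by ring
    calc |tck m u l| = |tck m u l| * ((1+|l|) ^ ((3:ℝ)/2) * (1+|l|) ^ (-(3:ℝ)/2)) := by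
          rw [hone, mul_one]
      _ ≤ (6*(M0*S)*(1+|u|)) * ((9*(1+|u|)^2) * (1+|l|) ^ (-(3:ℝ)/2)) := by
          apply mul_le_mul hKle (mul_le_mul_of_nonneg_right h32 hWpos.le)
            (by positivity) (by positivity)
      _ = (54*(M0*S)) * (1+|u|)^3 * (1+|l|) ^ (-(3:ℝ)/2) := by ring
      _ ≤ (54*(M0*S) + C2) * (1+|u|)^3 * (1+|l|) ^ (-(3:ℝ)/2) := by
          apply mul_le_mul_of_nonneg_right _ hWpos.le
          apply mul_le_mul_of_nonneg_right _ hu3.le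
          linarith
  · -- large |l|
    have hl2 : (2:ℝ) ≤ |l| := by linarith [abs_nonneg u]
    have hlpos : (0:ℝ) < |l| := by linarith
    have hul : |u| ≤ |l|/2 - 1 := by linarith
    have hdecomp : tck m u l
        = (tcg m (u-l) + tcg m l) * tch m l + tcg m l * (tch m (u-l) - tch m l) := by
      rw [tck]; ring
    -- Term A : mean value estimate for tcg
    have hgsum : |tcg m (u-l) + tcg m l| ≤ ((15/2) * (l^2/4) ^ (-(5:ℝ)/4)) * |u| := by
      have hodd : tcg m (u-l) = - tcg m (l-u) := by
        rw [show u-l = -(l-u) by ring, tcg_neg]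
      rw [hodd, neg_add_eq_sub]
      have := tcg_sub_le hm (C := (15/2) * (l^2/4) ^ (-(5:ℝ)/4)) (l-u) l ?_
      · simpa [show l - (l-u) = u by ring] using this
      · intro t ht
        have htl : |t - l| ≤ |u| := by
          rw [Set.mem_uIcc] at ht
          rcases ht with ⟨h1, h2⟩ | ⟨h1, h2⟩ <;>
            exact abs_le.2 ⟨by linarith [le_abs_self u, neg_abs_le u, abs_nonneg u],
              by linarith [le_abs_self u, neg_abs_le u, abs_nonneg u]⟩
        have habs : |l|/2 ≤ |t| := by
          have h1 : |l| - |t| ≤ |l - t| := abs_sub_abs_le_abs_sub l t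
          rw [abs_sub_comm] at h1
          linarith
        have ht2 : l^2/4 ≤ t^2 + 4*m^2 := by
          have h2 := mul_self_le_mul_self (by positivity : (0:ℝ) ≤ |l|/2) habs
          nlinarith [sq_abs t, sq_abs l, sq_nonneg m]
        exact mul_le_mul_of_nonneg_left (rpow_anti (by nlinarith [sq_abs l, hl2]) ht2 (by norm_num))
          (by norm_num)
    -- tch m l estimate
    have htchl : tch m l ≤ S * (2 ^ ((1:ℝ)/2) * |l| ^ ((1:ℝ)/2)) := by
      refine (tch_le hm l).trans ?_
      apply mul_le_mul_of_nonneg_left _ hS.le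
      rw [← Real.mul_rpow (by norm_num) (abs_nonneg l)]
      exact Real.rpow_le_rpow (by linarith [abs_nonneg l]) (by linarith) (by norm_num)
    -- rewrite (l²/4)^{-5/4}
    have hrl : (l^2/4) ^ (-(5:ℝ)/4) = 4 ^ ((5:ℝ)/4) * |l| ^ (-(5:ℝ)/2) := by
      rw [Real.div_rpow (sq_nonneg l) (by norm_num), div_eq_mul_inv,
        ← Real.rpow_neg (by norm_num : (0:ℝ) ≤ 4)]
      rw [show l^2 = |l|^2 from (sq_abs l).symm, ← Real.rpow_natCast |l| 2,
        ← Real.rpow_mul (abs_nonneg l)]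
      norm_num [mul_comm]
    -- Term B pieces
    have hgl : |tcg m l| ≤ |l| ^ (-(3:ℝ)/2) := by
      refine (tcg_abs_le hm l).trans ?_
      have hl2p : (0:ℝ) < l^2 := by nlinarith [sq_abs l]
      have e : (l^2) ^ (-(3:ℝ)/4) = |l| ^ (-(3:ℝ)/2) := by
        rw [show l^2 = |l|^2 from (sq_abs l).symm, ← Real.rpow_natCast |l| 2,
          ← Real.rpow_mul (abs_nonneg l)]
        norm_num
      rw [← e]
      exact rpow_anti hl2p (by nlinarith [sq_nonneg m]) (by norm_num)
    have htchd : |tch m (u-l) - tch m l| ≤ H * |u| := by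
      have heven : tch m (u-l) = tch m (l-u) := by
        rw [show u-l = -(l-u) by ring, tch_neg]
      rw [heven]
      have h0 := tch_sub_le hm l (l-u)
      rw [show l - u - l = -u by ring, abs_neg] at h0
      exact hHdef ▸ h0
    -- assemble
    have hstep : |tck m u l|
        ≤ ((15/2) * (l^2/4) ^ (-(5:ℝ)/4) * |u|) * (S * (2 ^ ((1:ℝ)/2) * |l| ^ ((1:ℝ)/2)))
          + |l| ^ (-(3:ℝ)/2) * (H * |u|) := by
      rw [hdecomp]
      refine (abs_add_le _ _).trans ?_
      rw [abs_mul, abs_mul, abs_of_pos (tch_pos hm l)]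
      exact add_le_add
        (mul_le_mul hgsum htchl (tch_pos hm l).le (by positivity))
        (mul_le_mul hgl htchd (abs_nonneg _) (Real.rpow_nonneg (abs_nonneg l) _))
    have hll : |l| ^ (-(5:ℝ)/2) * |l| ^ ((1:ℝ)/2) = |l| ^ (-(2:ℝ)) := by
      rw [← Real.rpow_add hlpos]; norm_num
    have hl32a : |l| ^ (-(2:ℝ)) ≤ |l| ^ (-(3:ℝ)/2) :=
      Real.rpow_le_rpow_of_exponent_le (by linarith) (by norm_num)
    have hl32 : |l| ^ (-(3:ℝ)/2) ≤ 2 ^ ((3:ℝ)/2) * (1+|l|) ^ (-(3:ℝ)/2) := by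
      have h := rpow_anti (x := 1+|l|) (y := 2*|l|) (p := -(3:ℝ)/2)
        (by linarith) (by linarith) (by norm_num)
      rw [Real.mul_rpow (by norm_num) (abs_nonneg l)] at h
      calc |l| ^ (-(3:ℝ)/2) = 2 ^ ((3:ℝ)/2) * (2 ^ (-(3:ℝ)/2) * |l| ^ (-(3:ℝ)/2)) := by
            rw [← mul_assoc, ← Real.rpow_add (by norm_num : (0:ℝ) < 2)]
            norm_num
        _ ≤ 2 ^ ((3:ℝ)/2) * (1+|l|) ^ (-(3:ℝ)/2) :=
            mul_le_mul_of_nonneg_left h (Real.rpow_nonneg (by norm_num) _)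
    have hu3' : |u| ≤ (1+|u|)^3 := by
      have h1 : (1+|u|) ^ (1:ℕ) ≤ (1+|u|) ^ (3:ℕ) :=
        pow_le_pow_right₀ hu1 (by norm_num)
      simp only [pow_one] at h1
      linarith
    have hfin : |tck m u l| ≤ C2 * |u| * (1+|l|) ^ (-(3:ℝ)/2) := by
      have e1 : ((15/2) * (l^2/4) ^ (-(5:ℝ)/4) * |u|) * (S * (2 ^ ((1:ℝ)/2) * |l| ^ ((1:ℝ)/2)))
          = ((15/2) * 4 ^ ((5:ℝ)/4) * (S * 2 ^ ((1:ℝ)/2)) * |u|) * (|l| ^ (-(5:ℝ)/2) * |l| ^ ((1:ℝ)/2)) := by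
        rw [hrl]; ring
      have e2 : (|l| ^ (-(5:ℝ)/2) * |l| ^ ((1:ℝ)/2)) ≤ 2 ^ ((3:ℝ)/2) * (1+|l|) ^ (-(3:ℝ)/2) := by
        rw [hll]; exact hl32a.trans hl32
      have c1pos : (0:ℝ) ≤ (15/2) * 4 ^ ((5:ℝ)/4) * (S * 2 ^ ((1:ℝ)/2)) * |u| := by
        have : (0:ℝ) < 4 ^ ((5:ℝ)/4) := Real.rpow_pos_of_pos (by norm_num) _
        have : (0:ℝ) < 2 ^ ((1:ℝ)/2) := Real.rpow_pos_of_pos (by norm_num) _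
        positivity
      refine hstep.trans ?_
      rw [e1]
      have b1 : ((15/2) * 4 ^ ((5:ℝ)/4) * (S * 2 ^ ((1:ℝ)/2)) * |u|) * (|l| ^ (-(5:ℝ)/2) * |l| ^ ((1:ℝ)/2))
          ≤ ((15/2) * 4 ^ ((5:ℝ)/4) * (S * 2 ^ ((1:ℝ)/2)) * |u|) * (2 ^ ((3:ℝ)/2) * (1+|l|) ^ (-(3:ℝ)/2)) :=
        mul_le_mul_of_nonneg_left e2 c1pos
      have b2 : |l| ^ (-(3:ℝ)/2) * (H * |u|) ≤ (2 ^ ((3:ℝ)/2) * (1+|l|) ^ (-(3:ℝ)/2)) * (H * |u|) :=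
        mul_le_mul_of_nonneg_right hl32 (by positivity)
      calc _ ≤ ((15/2) * 4 ^ ((5:ℝ)/4) * (S * 2 ^ ((1:ℝ)/2)) * |u|) * (2 ^ ((3:ℝ)/2) * (1+|l|) ^ (-(3:ℝ)/2))
            + (2 ^ ((3:ℝ)/2) * (1+|l|) ^ (-(3:ℝ)/2)) * (H * |u|) := add_le_add b1 b2
        _ = C2 * |u| * (1+|l|) ^ (-(3:ℝ)/2) := by rw [hC2def]; ring
    refine hfin.trans ?_
    calc C2 * |u| * (1+|l|) ^ (-(3:ℝ)/2) ≤ C2 * (1+|u|)^3 * (1+|l|) ^ (-(3:ℝ)/2) := by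
          exact mul_le_mul_of_nonneg_right (mul_le_mul_of_nonneg_left hu3' hC2.le) hWpos.le
      _ ≤ (54*(M0*S) + C2) * (1+|u|)^3 * (1+|l|) ^ (-(3:ℝ)/2) := by
          apply mul_le_mul_of_nonneg_right _ hWpos.le
          apply mul_le_mul_of_nonneg_right _ hu3.le
          nlinarith [mul_pos hM0 hS]

lemma tck_eq {m : ℝ} (hm : 0 < m) (u l : ℝ) :
    ((u - l) ^ 3 * (l ^ 2 + m ^ 2) * (l ^ 2 + 4 * m ^ 2) ^ ((3 : ℝ) / 2)
        + l ^ 3 * ((u - l) ^ 2 + m ^ 2) * ((u - l) ^ 2 + 4 * m ^ 2) ^ ((3 : ℝ) / 2)) /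
      (((u - l) ^ 2 + m ^ 2) * (l ^ 2 + m ^ 2) * ((u - l) ^ 2 + 4 * m ^ 2) ^ ((5 : ℝ) / 4) *
        (l ^ 2 + 4 * m ^ 2) ^ ((5 : ℝ) / 4)) = tck m u l := by
  have hA1 : (0:ℝ) < (u-l)^2 + m^2 := D1_pos hm _
  have hB1 : (0:ℝ) < l^2 + m^2 := D1_pos hm _
  have hA2 : (0:ℝ) < (u-l)^2 + 4*m^2 := D2_pos hm _
  have hB2 : (0:ℝ) < l^2 + 4*m^2 := D2_pos hm _
  have e1 : ((u-l)^2+4*m^2) ^ ((3:ℝ)/2)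
      = ((u-l)^2+4*m^2) ^ ((5:ℝ)/4) * ((u-l)^2+4*m^2) ^ ((1:ℝ)/4) := by
    rw [← Real.rpow_add hA2]; norm_num
  have e2 : (l^2+4*m^2) ^ ((3:ℝ)/2)
      = (l^2+4*m^2) ^ ((5:ℝ)/4) * (l^2+4*m^2) ^ ((1:ℝ)/4) := by
    rw [← Real.rpow_add hB2]; norm_num
  have e3 : ((u-l)^2+4*m^2) ^ (-(5:ℝ)/4) = (((u-l)^2+4*m^2) ^ ((5:ℝ)/4))⁻¹ := by
    rw [show (-(5:ℝ)/4) = -((5:ℝ)/4) by norm_num, Real.rpow_neg hA2.le]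
  have e4 : (l^2+4*m^2) ^ (-(5:ℝ)/4) = ((l^2+4*m^2) ^ ((5:ℝ)/4))⁻¹ := by
    rw [show (-(5:ℝ)/4) = -((5:ℝ)/4) by norm_num, Real.rpow_neg hB2.le]
  have n3 : ((u-l)^2+4*m^2) ^ ((5:ℝ)/4) ≠ 0 := (Real.rpow_pos_of_pos hA2 _).ne'
  have n4 : (l^2+4*m^2) ^ ((5:ℝ)/4) ≠ 0 := (Real.rpow_pos_of_pos hB2 _).ne'
  unfold tck tcg tch
  rw [e1, e2, e3, e4]
  field_simp

lemma fourierHat_eq (f : SchwartzMap ℝ ℂ) (u : ℝ) :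
    fourierHat f u = ((1 / Real.sqrt (2 * Real.pi) : ℝ) : ℂ)
      * (SchwartzMap.fourierTransformCLM ℂ f) (u / (2 * Real.pi)) := by
  rw [fourierHat, SchwartzMap.fourierTransformCLM_apply, SchwartzMap.fourier_coe, Real.fourier_eq']
  congr 1
  refine integral_congr_ae (Filter.Eventually.of_forall fun x => ?_)
  simp only [smul_eq_mul]
  congr 1
  have hπ : (Real.pi : ℂ) ≠ 0 := by exact_mod_cast Real.pi_ne_zero
  have h : (inner ℝ x (u / (2 * Real.pi)) : ℝ) = x * (u / (2 * Real.pi)) := Real.inner_apply _ _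
  rw [h]
  have h2π : (2*(Real.pi:ℂ)) ≠ 0 := by simp [hπ]
  push_cast
  field_simp

lemma fourierHat_continuous (f : SchwartzMap ℝ ℂ) : Continuous (fourierHat f) := by
  have : fourierHat f = fun u => ((1 / Real.sqrt (2 * Real.pi) : ℝ) : ℂ)
      * (SchwartzMap.fourierTransformCLM ℂ f) (u / (2 * Real.pi)) :=
    funext (fourierHat_eq f)
  rw [this]
  exact continuous_const.mul ((SchwartzMap.fourierTransformCLM ℂ f).continuous.comp
    (continuous_id.div_const _))

lemma fourierHat_decay_integrable (f : SchwartzMap ℝ ℂ) :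
    Integrable (fun u : ℝ => ‖fourierHat f u‖ * (1+|u|)^3) := by
  set g := SchwartzMap.fourierTransformCLM ℂ f with hg
  set c : ℝ := 1 / Real.sqrt (2*Real.pi) with hc
  have hc0 : 0 ≤ c := by positivity
  have hc1 : c ≤ 1 := by
    rw [hc]
    have h1 : (1:ℝ) ≤ Real.sqrt (2*Real.pi) := by
      rw [show (1:ℝ) = Real.sqrt 1 by simp]
      exact Real.sqrt_le_sqrt (by nlinarith [Real.pi_gt_three])
    rw [div_le_one (by linarith)]
    exact h1
  have hφ : Integrable (fun v : ℝ => (c * ‖g v‖) * (1 + 2*Real.pi*|v|)^3) := by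
    have i0 : Integrable (fun v : ℝ => ‖g v‖) := g.integrable.norm
    have i1 := (g.integrable_pow_mul volume 1).const_mul 3
    have i2 := (g.integrable_pow_mul volume 2).const_mul 3
    have i3 := g.integrable_pow_mul volume 3
    have hkey2 : Integrable (fun v : ℝ => (1+2*Real.pi)^3 * ((1+|v|)^3 * ‖g v‖)) := by
      refine ((((i0.add i1).add i2).add i3).const_mul ((1+2*Real.pi)^3)).congr
        (Filter.Eventually.of_forall fun v => ?_)
      simp only [Pi.add_apply]
      rw [Real.norm_eq_abs]; ring
    refine hkey2.mono' ?_ (Filter.Eventually.of_forall fun v => ?_)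
    · exact ((continuous_const.mul g.continuous.norm).mul
        ((continuous_const.add (continuous_const.mul continuous_abs)).pow 3)).aestronglyMeasurable
    · have hnonneg : (0:ℝ) ≤ (c * ‖g v‖) * (1 + 2*Real.pi*|v|)^3 := by positivity
      rw [Real.norm_eq_abs, abs_of_nonneg hnonneg]
      have hb : (1 + 2*Real.pi*|v|)^3 ≤ (1+2*Real.pi)^3 * (1+|v|)^3 := by
        rw [← mul_pow]
        apply pow_le_pow_left₀ (by positivity)
        nlinarith [abs_nonneg v, Real.pi_pos]
      have hcg : c * ‖g v‖ ≤ ‖g v‖ := by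
        nlinarith [norm_nonneg (g v)]
      calc (c * ‖g v‖) * (1 + 2*Real.pi*|v|)^3
          ≤ ‖g v‖ * ((1+2*Real.pi)^3 * (1+|v|)^3) :=
            mul_le_mul hcg hb (by positivity) (norm_nonneg _)
        _ = (1+2*Real.pi)^3 * ((1+|v|)^3 * ‖g v‖) := by ring
  have heq : (fun u : ℝ => ‖fourierHat f u‖ * (1+|u|)^3)
      = fun u => (c * ‖g (u/(2*Real.pi))‖) * (1 + 2*Real.pi*|u/(2*Real.pi)|)^3 := by
    funext u
    rw [fourierHat_eq, norm_mul, Complex.norm_real, Real.norm_eq_abs,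
      abs_of_nonneg (by positivity : (0:ℝ) ≤ 1/Real.sqrt (2*Real.pi))]
    have : 2*Real.pi*|u/(2*Real.pi)| = |u| := by
      rw [abs_div, abs_of_pos (by positivity : (0:ℝ) < 2*Real.pi)]
      field_simp
    rw [this]
  rw [heq]
  exact hφ.comp_div (by positivity : (2*Real.pi) ≠ 0)

/-- The key cancellation underlying the trace-class property of the perturbed
covariance: for every Schwartz function `f`, the function
`(u,l) ↦ f̂(u)·[(u−l)³(l²+m²)(l²+4m²)^{3/2} + l³((u−l)²+m²)((u−l)²+4m²)^{3/2}] /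
[((u−l)²+m²)(l²+m²)((u−l)²+4m²)^{5/4}(l²+4m²)^{5/4}]`
is Lebesgue integrable on `ℝ²`. -/
theorem trace_class_cancellation (m : ℝ) (hm : 0 < m) (f : SchwartzMap ℝ ℂ) :
    Integrable (fun p : ℝ × ℝ =>
      fourierHat f p.1 *
        Complex.ofReal
          (((p.1 - p.2) ^ 3 * (p.2 ^ 2 + m ^ 2) * (p.2 ^ 2 + 4 * m ^ 2) ^ ((3 : ℝ) / 2)
              + p.2 ^ 3 * ((p.1 - p.2) ^ 2 + m ^ 2) *
                ((p.1 - p.2) ^ 2 + 4 * m ^ 2) ^ ((3 : ℝ) / 2)) /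
            (((p.1 - p.2) ^ 2 + m ^ 2) * (p.2 ^ 2 + m ^ 2) *
              ((p.1 - p.2) ^ 2 + 4 * m ^ 2) ^ ((5 : ℝ) / 4) *
              (p.2 ^ 2 + 4 * m ^ 2) ^ ((5 : ℝ) / 4)))) := by
  obtain ⟨C, hC0, hCb⟩ := tck_bound hm
  have hrw : (fun p : ℝ × ℝ =>
      fourierHat f p.1 *
        Complex.ofReal
          (((p.1 - p.2) ^ 3 * (p.2 ^ 2 + m ^ 2) * (p.2 ^ 2 + 4 * m ^ 2) ^ ((3 : ℝ) / 2)
              + p.2 ^ 3 * ((p.1 - p.2) ^ 2 + m ^ 2) *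
                ((p.1 - p.2) ^ 2 + 4 * m ^ 2) ^ ((3 : ℝ) / 2)) /
            (((p.1 - p.2) ^ 2 + m ^ 2) * (p.2 ^ 2 + m ^ 2) *
              ((p.1 - p.2) ^ 2 + 4 * m ^ 2) ^ ((5 : ℝ) / 4) *
              (p.2 ^ 2 + 4 * m ^ 2) ^ ((5 : ℝ) / 4))))
      = fun p : ℝ × ℝ => fourierHat f p.1 * Complex.ofReal (tck m p.1 p.2) := by
    funext p
    rw [tck_eq hm p.1 p.2]
  rw [hrw]
  have h1 : Integrable (fun u : ℝ => C * (‖fourierHat f u‖ * (1+|u|)^3)) :=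
    (fourierHat_decay_integrable f).const_mul C
  have h2 : Integrable (fun l : ℝ => (1+|l|) ^ (-(3:ℝ)/2)) := by
    have h := integrable_one_add_norm (E := ℝ) (μ := volume) (r := 3/2) (by norm_num)
    refine h.congr (Filter.Eventually.of_forall fun l => ?_)
    simp only [Real.norm_eq_abs]
    norm_num
  have hprod : Integrable
      (fun p : ℝ × ℝ => (C * (‖fourierHat f p.1‖ * (1+|p.1|)^3)) * ((1+|p.2|) ^ (-(3:ℝ)/2)))
      (volume.prod volume) := h1.mul_prod h2
  rw [← MeasureTheory.Measure.volume_eq_prod] at hprod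
  refine hprod.mono' ?_ (Filter.Eventually.of_forall fun p => ?_)
  · apply Continuous.aestronglyMeasurable
    refine ((fourierHat_continuous f).comp continuous_fst).mul
      (Complex.continuous_ofReal.comp ?_)
    exact (((tcg_continuous hm).comp (continuous_fst.sub continuous_snd)).mul
        ((tch_continuous hm).comp continuous_snd)).add
      (((tcg_continuous hm).comp continuous_snd).mul
        ((tch_continuous hm).comp (continuous_fst.sub continuous_snd)))
  · rw [norm_mul, Complex.norm_real, Real.norm_eq_abs]
    calc ‖fourierHat f p.1‖ * |tck m p.1 p.2|
        ≤ ‖fourierHat f p.1‖ * (C * (1+|p.1|)^3 * (1+|p.2|) ^ (-(3:ℝ)/2)) :=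
          mul_le_mul_of_nonneg_left (hCb p.1 p.2) (norm_nonneg _)
      _ = (C * (‖fourierHat f p.1‖ * (1+|p.1|)^3)) * ((1+|p.2|) ^ (-(3:ℝ)/2)) := by ring
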